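/- For any simple graph G on a finite vertex set with n ≥ 6 vertices, 0 ≤ ai(G) ≤ n(n−1)/2 − (n−2). -/

import Mathlib

/-- A simple graph is *asymmetric* if its only automorphism is the identity. -/
def SimpleGraph.IsAsymmetric {V : Type*} (G : SimpleGraph V) : Prop :=
  ∀ f : G ≃g G, ∀ v : V, f v = v

/-- The *asymmetric index* `ai(G)`: the minimum, over all asymmetric graphs `G'` on the
same vertex set, of the number of edges in which `G` and `G'` differ (edges removed plus
edges added); `⊤` (infinity) if no asymmetric graph on the vertex set exists. -/
noncomputable def SimpleGraph.asymIndex {V : Type*} (G : SimpleGraph V) : ℕ∞ :=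
  sInf {n : ℕ∞ | ∃ G' : SimpleGraph V, G'.IsAsymmetric ∧
    n = (symmDiff G.edgeSet G'.edgeSet).encard}

/-! The path `0 - 1 - ⋯ - (n-1)` with the chord `1 - 3`, a triangle carrying tails of
lengths `1` and `n - 4 ≥ 2`, is asymmetric for `n ≥ 6`, and then so is its complement `Aᶜ`.
Every pair of distinct vertices lies in exactly one of `E(G) ∆ E(A)` and `E(G) ∆ E(Aᶜ)`, so
one of these has at most `n(n-1)/4 ≤ n(n-1)/2 - (n-2)` elements. -/

theorem Nat.two_mul_sub_two_le_choose_two : ∀ n : ℕ, 2 * (n - 2) ≤ n.choose 2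
  | 0 => le_rfl
  | n + 1 => by
    have := Nat.two_mul_sub_two_le_choose_two n
    simp only [Nat.choose_succ_left _ _ two_pos, Nat.reduceSub, Nat.choose_one_right]
    omega

namespace SimpleGraph

variable {V W : Type*} {G : SimpleGraph V}

theorem Iso.apply_eq_of_adj (f : G ≃g G) {u v : V} (hu : f u = u) (huv : G.Adj u v)
    (hfix : ∀ w, G.Adj u w → w ≠ v → f w = w) : f v = v := by
  have hadj : G.Adj u (f v) := by simpa [hu] using f.map_adj_iff.mpr huv
  by_contra hne
  exact hne (f.injective (hfix _ hadj hne))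

theorem Iso.encard_neighborSet {G' : SimpleGraph W} (f : G ≃g G') (v : V) :
    (G'.neighborSet (f v)).encard = (G.neighborSet v).encard :=
  (Set.encard_congr (f.mapNeighborSet v)).symm

theorem IsAsymmetric.of_iso {H : SimpleGraph W} (hH : H.IsAsymmetric) (e : G ≃g H) :
    G.IsAsymmetric := fun f v =>
  e.injective <| by simpa using hH (e.symm.trans (f.trans e)) (e v)

theorem IsAsymmetric.compl (hG : G.IsAsymmetric) : Gᶜ.IsAsymmetric := by
  intro f v
  refine hG ⟨f.toEquiv, fun {a b} => ?_⟩ v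
  by_cases hab : a = b
  · simp [hab]
  · have hf : f a ≠ f b := f.injective.ne hab
    simpa [hab, hf] using (f.map_adj_iff (v := a) (w := b)).not

theorem edgeSet_symmDiff_compl (G H : SimpleGraph V) :
    symmDiff G.edgeSet Hᶜ.edgeSet =
      (⊤ : SimpleGraph V).edgeSet \ symmDiff G.edgeSet H.edgeSet := by
  ext e
  induction e using Sym2.ind with
  | _ a b =>
    have hG : G.Adj a b → a ≠ b := G.ne_of_adj
    have hH : H.Adj a b → a ≠ b := H.ne_of_adj
    simp only [Set.mem_symmDiff, Set.mem_sdiff, mem_edgeSet, compl_adj, top_adj]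
    tauto

theorem ncard_symmDiff_add_ncard_symmDiff_compl [Fintype V] (G H : SimpleGraph V) :
    (symmDiff G.edgeSet H.edgeSet).ncard + (symmDiff G.edgeSet Hᶜ.edgeSet).ncard =
      (Fintype.card V).choose 2 := by
  classical
  have hsub : symmDiff G.edgeSet H.edgeSet ⊆ (⊤ : SimpleGraph V).edgeSet :=
    Set.symmDiff_subset_union.trans (Set.union_subset (edgeSet_mono le_top) (edgeSet_mono le_top))
  rw [edgeSet_symmDiff_compl, Set.ncard_sdiff hsub, Nat.add_sub_cancel' (Set.ncard_le_ncard hsub),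
    ← coe_edgeFinset, Set.ncard_coe_finset, card_edgeFinset_top_eq_card_choose_two]

theorem asymIndex_le_ncard [Finite V] {A : SimpleGraph V} (hA : A.IsAsymmetric) :
    G.asymIndex ≤ (symmDiff G.edgeSet A.edgeSet).ncard := by
  rw [(Set.toFinite _).cast_ncard_eq]
  exact sInf_le ⟨A, hA, rfl⟩

def pathWithChord (n : ℕ) : SimpleGraph (Fin n) :=
  fromRel fun u v => u.val + 1 = v.val ∨ (u.val = 1 ∧ v.val = 3)

namespace pathWithChord

variable {n : ℕ}

theorem adj_iff {u v : Fin n} : (pathWithChord n).Adj u v ↔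
    u.val + 1 = v.val ∨ v.val + 1 = u.val ∨ (u.val = 1 ∧ v.val = 3) ∨
      (u.val = 3 ∧ v.val = 1) := by
  simp only [pathWithChord, fromRel_adj, ne_eq, Fin.ext_iff]
  omega

theorem val_eq_one_or_three_of_adj {v a b c : Fin n} (ha : (pathWithChord n).Adj v a)
    (hb : (pathWithChord n).Adj v b) (hc : (pathWithChord n).Adj v c)
    (hab : a ≠ b) (hac : a ≠ c) (hbc : b ≠ c) : v.val = 1 ∨ v.val = 3 := by
  rw [adj_iff] at ha hb hc
  rw [Ne, Fin.ext_iff] at hab hac hbc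
  omega

theorem val_eq_zero_or_last_of_encard_le_one {v : Fin n}
    (hv : ((pathWithChord n).neighborSet v).encard ≤ 1) : v.val = 0 ∨ v.val + 1 = n := by
  by_contra! h
  have := Set.encard_le_one_iff.mp hv ⟨v.val - 1, by omega⟩ ⟨v.val + 1, by omega⟩
    (adj_iff.mpr (by dsimp only; omega)) (adj_iff.mpr (by dsimp only; omega))
  simp only [Fin.ext_iff] at this
  omega

theorem encard_neighborSet_zero_le_one (h : 0 < n) :
    ((pathWithChord n).neighborSet ⟨0, h⟩).encard ≤ 1 := by
  refine Set.encard_le_one_iff.mpr fun a b ha hb => ?_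
  rw [mem_neighborSet, adj_iff] at ha hb
  exact Fin.ext (by simp only at ha hb; omega)

/-- `0` is the only leaf next to a vertex with three neighbours, and `1`, `3` are the only such
vertices; once `0`, `1`, `3` are fixed, every other vertex `m` is the only neighbour of `m - 1`
not yet known to be fixed. -/
theorem isAsymmetric (hn : 6 ≤ n) : (pathWithChord n).IsAsymmetric := by
  intro f
  have hadj (u v : ℕ) (h : u + 1 = v ∨ (u = 1 ∧ v = 3)) (hv : v < n := by omega) :
      (pathWithChord n).Adj ⟨u, by omega⟩ ⟨v, hv⟩ := adj_iff.mpr (by dsimp only; omega)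
  have hne (u v : ℕ) (h : u ≠ v) (hu : u < n := by omega) (hv : v < n := by omega) :
      f ⟨u, hu⟩ ≠ f ⟨v, hv⟩ :=
    f.injective.ne (by simpa [Fin.ext_iff] using h)
  have hbranch : (f ⟨1, by omega⟩).val = 1 ∨ (f ⟨1, by omega⟩).val = 3 :=
    val_eq_one_or_three_of_adj (f.map_adj_iff.mpr (hadj 0 1 (by omega)).symm)
      (f.map_adj_iff.mpr (hadj 1 2 (by omega))) (f.map_adj_iff.mpr (hadj 1 3 (by omega)))
      (hne 0 2 (by omega)) (hne 0 3 (by omega)) (hne 2 3 (by omega))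
  have hf0 : f ⟨0, by omega⟩ = ⟨0, by omega⟩ := by
    have hleaf := val_eq_zero_or_last_of_encard_le_one
      ((f.encard_neighborSet _).trans_le (encard_neighborSet_zero_le_one (by omega)))
    have h01 := adj_iff.mp (f.map_adj_iff.mpr (hadj 0 1 (by omega)))
    exact Fin.ext (by dsimp only; omega)
  have hf1 : f ⟨1, by omega⟩ = ⟨1, by omega⟩ := by
    have h01 := adj_iff.mp (f.map_adj_iff.mpr (hadj 0 1 (by omega)))
    rw [hf0] at h01
    exact Fin.ext (by dsimp only at h01 ⊢; omega)
  have hf3 : f ⟨3, by omega⟩ = ⟨3, by omega⟩ := by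
    have h3 := val_eq_one_or_three_of_adj (f.map_adj_iff.mpr (hadj 1 3 (by omega)).symm)
      (f.map_adj_iff.mpr (hadj 2 3 (by omega)).symm) (f.map_adj_iff.mpr (hadj 3 4 (by omega)))
      (hne 1 2 (by omega)) (hne 1 4 (by omega)) (hne 2 4 (by omega))
    have h13 := hne 1 3 (by omega)
    rw [hf1, Ne, Fin.ext_iff] at h13
    exact Fin.ext (by dsimp only at h13 ⊢; omega)
  suffices ∀ m (hm : m < n), f ⟨m, hm⟩ = ⟨m, hm⟩ from fun v => this v.val v.isLt
  intro m
  induction m using Nat.strong_induction_on with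
  | _ m ih =>
    intro hm
    rcases (by omega : m = 0 ∨ m = 1 ∨ m = 3 ∨ (2 ≤ m ∧ m ≠ 3))
      with rfl | rfl | rfl | ⟨hm2, hm3⟩
    · exact hf0
    · exact hf1
    · exact hf3
    refine f.apply_eq_of_adj (ih (m - 1) (by omega) _) (hadj (m - 1) m (by omega))
      fun w hw hwm => ?_
    rw [adj_iff] at hw
    simp only [ne_eq, Fin.ext_iff] at hw hwm
    rcases (by omega : w.val < m ∨ w.val = 3) with hlt | h3
    · exact ih _ hlt w.isLt
    · rw [show w = ⟨3, by omega⟩ from Fin.ext h3]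
      exact hf3

end pathWithChord

theorem exists_isAsymmetric [Fintype V] (hV : 6 ≤ Fintype.card V) :
    ∃ A : SimpleGraph V, A.IsAsymmetric :=
  ⟨_, (pathWithChord.isAsymmetric hV).of_iso (Iso.comap (Fintype.equivFin V) _)⟩

end SimpleGraph

/-- For a graph on `n ≥ 6` vertices, `0 ≤ ai(G) ≤ n(n-1)/2 - (n-2)`. -/
theorem asymIndex_le_bound {V : Type*} [Fintype V] (hV : 6 ≤ Fintype.card V)
    (G : SimpleGraph V) :
    0 ≤ G.asymIndex ∧
      G.asymIndex ≤
        ((Fintype.card V * (Fintype.card V - 1) / 2 - (Fintype.card V - 2) : ℕ) : ℕ∞) := by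
  refine ⟨zero_le, ?_⟩
  obtain ⟨A, hA⟩ := SimpleGraph.exists_isAsymmetric hV
  have hsum := SimpleGraph.ncard_symmDiff_add_ncard_symmDiff_compl G A
  have hchoose := Nat.two_mul_sub_two_le_choose_two (Fintype.card V)
  rw [Nat.choose_two_right] at hsum hchoose
  set c := Fintype.card V
  rcases (by omega : (symmDiff G.edgeSet A.edgeSet).ncard ≤ c * (c - 1) / 2 - (c - 2) ∨
      (symmDiff G.edgeSet Aᶜ.edgeSet).ncard ≤ c * (c - 1) / 2 - (c - 2)) with h | h
  · exact (SimpleGraph.asymIndex_le_ncard hA).trans (by exact_mod_cast h)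
  · exact (SimpleGraph.asymIndex_le_ncard hA.compl).trans (by exact_mod_cast h)
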